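/- arXiv:1309.6298 — 5 statements merged into one kernel-verified Lean document; each statement's English description precedes it below -/
import Mathlib

section
/- Let v^1,…,v^{n-1} ∈ ℝ^n and let M be the n×(n-1) real matrix whose columns are these vectors; for k ∈ [n] let M(k) denote the (n-1)×(n-1) matrix obtained from M by deleting row k. Assume the vectors are in general position, i.e., for every k ∈ [n] there is a unique permutation σ of [n-1] attaining the maximum max_{σ} Σ_i M(k)_{iσ(i)}. Then there exists a tropical hyperplane H(a) ⊆ ℝ_max^n containing all of v^1,…,v^{n-1}, and this hyperplane is unique as a subset of ℝ_max^n. -/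
open Finset

/-- The tropical hyperplane `H(a)` in `ℝ_max^n`: the set of points `x` where the maximum
`max_i (a_i + x_i)` is attained at least twice. -/
def tropHyperplane {n : ℕ} (a : Fin n → WithBot ℝ) : Set (Fin n → WithBot ℝ) :=
  {x | ∃ i j : Fin n, i ≠ j ∧ a i + x i = a j + x j ∧ ∀ l, a l + x l ≤ a i + x i}

/-!
The hyperplane is `H(a)` for the tropical maximal minors `a k = tropMinor v k`. If the optimal
permutation of the minor at a maximiser `i` of `a + v ℓ` gives `v ℓ` the coordinate `j`, moving
`v ℓ` to `i` produces a permutation of the minor at `j`, so the maximum is attained at `j` too.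

For uniqueness let `v ℓ ∈ H(α)`, with `⊥` coefficients replaced by a real number too small to
matter, and let `M ℓ` be the maximum of `α + v ℓ`. Add to the points an extra row `none` of weight
`-α`: an assignment of the `m + 1` rows to the coordinates sending `none` to `k` is worth at most
`tropMinor v k - α k`, and the row potentials `M` (`0` on `none`) with the column potentials `α`
form a dual solution in which every point has two tight coordinates and `none` is tight at all. From an optimal assignment, send each row to the
owner of another tight coordinate of it; rotating along the cycles of this map gives a new
optimal assignment, which by general position must move `none`. So optimal assignments send
`none` to every coordinate: `tropMinor v k - α k` is constant, and every coordinate is tight for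
some point, so no coefficient was `⊥`.
-/

open Function Equiv

def realTropHyperplane {n : ℕ} (a : Fin n → ℝ) : Set (Fin n → ℝ) :=
  {x | ∃ i j : Fin n, i ≠ j ∧ a i + x i = a j + x j ∧ ∀ l, a l + x l ≤ a i + x i}

theorem coe_mem_tropHyperplane {n : ℕ} {a x : Fin n → ℝ} (h : x ∈ realTropHyperplane a) :
    (fun i => (x i : WithBot ℝ)) ∈ tropHyperplane fun i => (a i : WithBot ℝ) := by
  obtain ⟨i, j, hij, heq, hmax⟩ := h
  exact ⟨i, j, hij, by dsimp only; exact_mod_cast heq,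
    fun l => by dsimp only; exact_mod_cast hmax l⟩

theorem tropHyperplane_add_const {n : ℕ} (b : Fin n → WithBot ℝ) (c : ℝ) :
    tropHyperplane (fun k => b k + c) = tropHyperplane b := by
  ext x
  simp only [tropHyperplane, Set.mem_ofPred_eq, add_right_comm _ (c : WithBot ℝ),
    WithBot.add_right_inj WithBot.coe_ne_bot, WithBot.add_le_add_iff_right WithBot.coe_ne_bot]

theorem Function.exists_perm_ne_one_eqOn_support {α : Type*} [Finite α] [Nonempty α]
    {f : α → α} (hf : ∀ x, f x ≠ x) : ∃ g : Perm α, g ≠ 1 ∧ ∀ x, g x ≠ x → g x = f x := by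
  classical
  obtain ⟨x₀, hx₀⟩ : (periodicPts f).Nonempty := by
    obtain ⟨s, t, hst, h⟩ :=
      Finite.exists_ne_map_eq_of_infinite (f^[·] (Classical.arbitrary α))
    wlog hlt : s < t generalizing s t
    · exact this t s hst.symm h.symm (by omega)
    refine ⟨f^[s] (Classical.arbitrary α), mk_mem_periodicPts (Nat.sub_pos_of_lt hlt) ?_⟩
    rw [IsPeriodicPt, IsFixedPt, ← iterate_add_apply, Nat.sub_add_cancel hlt.le]
    exact h.symm
  set g := Perm.ofSubtype ((bijOn_periodicPts f).equiv f)
  have hg : ∀ x ∈ periodicPts f, g x = f x := fun x hx => Perm.ofSubtype_apply_of_mem _ hx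
  refine ⟨g, fun h => hf x₀ ?_, fun x hx => hg x ?_⟩
  · rw [← hg x₀ hx₀, h, Perm.one_apply]
  · by_contra h
    exact hx (Perm.ofSubtype_apply_of_not_mem _ h)

section Assignment

variable {ι κ : Type*} [Fintype ι] [Fintype κ]

def IsOptimalAssignment (W : ι → κ → ℝ) (τ : ι ≃ κ) : Prop :=
  ∀ σ : ι ≃ κ, ∑ x, W x (σ x) ≤ ∑ x, W x (τ x)

variable {W : ι → κ → ℝ} {α : κ → ℝ} {u : ι → ℝ}

theorem IsOptimalAssignment.exchange_tight (hfeas : ∀ x j, W x j + α j ≤ u x) {τ τ' : ι ≃ κ}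
    (hτ : IsOptimalAssignment W τ) (hτ' : ∀ x, τ' x ≠ τ x → W x (τ' x) + α (τ' x) = u x) :
    IsOptimalAssignment W τ' ∧ ∀ x, τ' x ≠ τ x → W x (τ x) + α (τ x) = u x := by
  set d : ι → ℝ := fun x => (W x (τ' x) + α (τ' x)) - (W x (τ x) + α (τ x))
  have hd : ∀ x, 0 ≤ d x := fun x => by
    by_cases hx : τ' x = τ x
    · simp [d, hx]
    · simp only [d, hτ' x hx]
      linarith [hfeas x (τ x)]
  have hsum : ∑ x, d x = ∑ x, W x (τ' x) - ∑ x, W x (τ x) := by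
    simp only [d, sum_sub_distrib, sum_add_distrib, Equiv.sum_comp τ' α, Equiv.sum_comp τ α]
    ring
  have hnonneg : 0 ≤ ∑ x, d x := sum_nonneg fun x _ => hd x
  have hle : ∑ x, W x (τ x) ≤ ∑ x, W x (τ' x) := by linarith
  have hd0 : d = 0 := (Fintype.sum_eq_zero_iff_of_nonneg hd).1 (by linarith [hτ τ'])
  refine ⟨fun σ => (hτ σ).trans hle, fun x hx => ?_⟩
  have := congrFun hd0 x
  simp only [d, hτ' x hx, Pi.zero_apply] at this
  linarith

theorem IsOptimalAssignment.exists_apply_eq {r : ι}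
    (hfeas : ∀ x j, W x j + α j ≤ u x) (hr : ∀ j, W r j + α j = u r)
    (htwo : ∀ x, x ≠ r → ∀ j, ∃ j', j' ≠ j ∧ W x j' + α j' = u x)
    (huniq : ∀ τ₁ τ₂ : ι ≃ κ, IsOptimalAssignment W τ₁ → IsOptimalAssignment W τ₂ →
      τ₁ r = τ₂ r → τ₁ = τ₂)
    {τ : ι ≃ κ} (hτ : IsOptimalAssignment W τ) {x₀ : ι} (hx₀ : x₀ ≠ r) :
    ∃ τ', IsOptimalAssignment W τ' ∧ τ' r = τ x₀ ∧ W x₀ (τ x₀) + α (τ x₀) = u x₀ := by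
  classical
  choose c hcne hc using htwo
  set c' : ι → κ := fun x => if hx : x = r then τ x₀ else c x hx (τ x)
  have hc'ne : ∀ x, c' x ≠ τ x := fun x => by
    by_cases hx : x = r
    · simp only [c', hx]
      exact τ.injective.ne hx₀
    · simp only [c', dif_neg hx]
      exact hcne x hx _
  have hc' : ∀ x, W x (c' x) + α (c' x) = u x := fun x => by
    by_cases hx : x = r
    · subst hx
      simp only [c', dif_pos rfl]
      exact hr _
    · simp only [c', dif_neg hx]
      exact hc x hx _
  have : Nonempty ι := ⟨r⟩
  -- `g` rotates the rows along cycles of `x ↦ τ.symm (c' x)`, handing each moved row `x` to `c' x`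
  obtain ⟨g, hg1, hg⟩ := exists_perm_ne_one_eqOn_support (f := fun x => τ.symm (c' x))
    fun x h => hc'ne x (by rw [← τ.apply_symm_apply (c' x), h])
  obtain ⟨hopt, htight⟩ := hτ.exchange_tight (τ' := g.trans τ) hfeas fun x hx => by
    have hgx : g x ≠ x := fun h => hx (by simp [h])
    simp only [Equiv.trans_apply, hg x hgx, apply_symm_apply]
    exact hc' x
  have hgr : g r ≠ r := fun h => hg1 <| Equiv.ext fun x =>
    τ.injective (congrArg (· x) (huniq _ _ hopt hτ (by simp [h])))
  have hgr' : g r = x₀ := by simp [hg r hgr, c']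
  refine ⟨g.trans τ, hopt, by simp [hgr'], htight x₀ ?_⟩
  rw [Equiv.trans_apply, τ.injective.ne_iff, ← hgr', g.injective.ne_iff]
  exact hgr

end Assignment

section TropicalMinor

variable {m : ℕ} (v : Fin m → Fin (m + 1) → ℝ)

noncomputable def tropMinor (k : Fin (m + 1)) : ℝ :=
  univ.sup' univ_nonempty fun π : Perm (Fin m) => ∑ i, v (π i) (k.succAbove i)

def InGeneralPosition : Prop :=
  ∀ k : Fin (m + 1), ∃! σ : Perm (Fin m), ∀ π : Perm (Fin m),
    ∑ i, v (π i) (k.succAbove i) ≤ ∑ i, v (σ i) (k.succAbove i)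

def assignmentOfPerm (k : Fin (m + 1)) (π : Perm (Fin m)) : Option (Fin m) ≃ Fin (m + 1) :=
  ((finSuccEquiv' k).trans π.optionCongr).symm

@[simp]
theorem assignmentOfPerm_none (k : Fin (m + 1)) (π : Perm (Fin m)) :
    assignmentOfPerm k π none = k := by
  simp [assignmentOfPerm, Equiv.symm_apply_eq]

theorem sum_assignmentOfPerm_some (k : Fin (m + 1)) (π : Perm (Fin m)) :
    ∑ ℓ, v ℓ (assignmentOfPerm k π (some ℓ)) = ∑ i, v (π i) (k.succAbove i) := by
  have h : ∀ i, assignmentOfPerm k π (some (π i)) = k.succAbove i := fun i => by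
    simp [assignmentOfPerm, Equiv.symm_apply_eq]
  rw [← Equiv.sum_comp π]
  simp only [h]

theorem exists_assignmentOfPerm_eq {k : Fin (m + 1)} (τ : Option (Fin m) ≃ Fin (m + 1))
    (hk : τ none = k) : ∃ π, assignmentOfPerm k π = τ := by
  set e := (finSuccEquiv' k).symm.trans τ.symm
  have hcongr : (removeNone e).optionCongr = e := by
    ext (_ | ℓ) : 1
    · simp [e, ← hk]
    · refine removeNone_some e (Option.ne_none_iff_exists'.1 fun h => ?_)
      exact Option.some_ne_none ℓ (e.injective (h.trans (by simp [e, ← hk])))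
  refine ⟨removeNone e, Equiv.ext fun x => ?_⟩
  simp [assignmentOfPerm, hcongr, e]

theorem sum_le_tropMinor (τ : Option (Fin m) ≃ Fin (m + 1)) :
    ∑ ℓ, v ℓ (τ (some ℓ)) ≤ tropMinor v (τ none) := by
  obtain ⟨π, hπ⟩ := exists_assignmentOfPerm_eq τ rfl
  rw [← hπ, sum_assignmentOfPerm_some]
  exact le_sup' (fun π : Perm (Fin m) => ∑ i, v (π i) ((τ none).succAbove i)) (mem_univ π)

theorem exists_sum_eq_tropMinor (k : Fin (m + 1)) :
    ∃ τ : Option (Fin m) ≃ Fin (m + 1), τ none = k ∧ ∑ ℓ, v ℓ (τ (some ℓ)) = tropMinor v k := by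
  obtain ⟨π, -, hπ⟩ := exists_mem_eq_sup' univ_nonempty
    fun π : Perm (Fin m) => ∑ i, v (π i) (k.succAbove i)
  exact ⟨assignmentOfPerm k π, assignmentOfPerm_none k π,
    (sum_assignmentOfPerm_some v k π).trans hπ.symm⟩

theorem mem_realTropHyperplane_tropMinor (ℓ : Fin m) : v ℓ ∈ realTropHyperplane (tropMinor v) := by
  obtain ⟨i, -, hi⟩ := exists_max_image univ (fun k => tropMinor v k + v ℓ k) univ_nonempty
  obtain ⟨τ, rfl, hτ⟩ := exists_sum_eq_tropMinor v i
  set τ' := (swap none (some ℓ)).trans τ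
  have hsum : ∑ ℓ', v ℓ' (τ' (some ℓ')) + v ℓ (τ (some ℓ)) =
      ∑ ℓ', v ℓ' (τ (some ℓ')) + v ℓ (τ none) := by
    rw [← add_sum_erase _ _ (mem_univ ℓ), ← add_sum_erase _ _ (mem_univ ℓ),
      sum_congr rfl fun ℓ' hℓ' => by
        rw [Equiv.trans_apply, swap_apply_of_ne_of_ne (Option.some_ne_none ℓ')
          (Option.some_injective _ |>.ne (ne_of_mem_erase hℓ'))]]
    simp only [τ', Equiv.trans_apply, swap_apply_right]
    ring
  have hle : ∑ ℓ', v ℓ' (τ' (some ℓ')) ≤ tropMinor v (τ (some ℓ)) := by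
    simpa [τ'] using sum_le_tropMinor v τ'
  exact ⟨τ none, τ (some ℓ), τ.injective.ne (Option.some_ne_none ℓ).symm,
    le_antisymm (by linarith) (hi _ (mem_univ _)), fun l => hi l (mem_univ l)⟩

end TropicalMinor

section Uniqueness

variable {m : ℕ} (v : Fin m → Fin (m + 1) → ℝ) (α : Fin (m + 1) → ℝ)

def augmentedWeight (x : Option (Fin m)) (k : Fin (m + 1)) : ℝ :=
  x.elim (-α k) (v · k)

theorem sum_augmentedWeight (τ : Option (Fin m) ≃ Fin (m + 1)) :
    ∑ x, augmentedWeight v α x (τ x) = ∑ ℓ, v ℓ (τ (some ℓ)) - α (τ none) := by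
  simp only [augmentedWeight, Fintype.sum_option, Option.elim_none, Option.elim_some]
  ring

variable {v α}

theorem IsOptimalAssignment.sum_augmentedWeight_eq {τ : Option (Fin m) ≃ Fin (m + 1)}
    (hτ : IsOptimalAssignment (augmentedWeight v α) τ) :
    ∑ x, augmentedWeight v α x (τ x) = tropMinor v (τ none) - α (τ none) := by
  obtain ⟨τ', hτ'none, hτ'⟩ := exists_sum_eq_tropMinor v (τ none)
  have := hτ τ'
  rw [sum_augmentedWeight, sum_augmentedWeight, hτ'none, hτ'] at this
  rw [sum_augmentedWeight]
  linarith [sum_le_tropMinor v τ]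

theorem IsOptimalAssignment.eq_of_apply_none_eq
    (hgen : InGeneralPosition v)
    {τ₁ τ₂ : Option (Fin m) ≃ Fin (m + 1)} (h₁ : IsOptimalAssignment (augmentedWeight v α) τ₁)
    (h₂ : IsOptimalAssignment (augmentedWeight v α) τ₂) (h : τ₁ none = τ₂ none) : τ₁ = τ₂ := by
  obtain ⟨k, hk⟩ : ∃ k, τ₁ none = k := ⟨_, rfl⟩
  obtain ⟨π₁, rfl⟩ := exists_assignmentOfPerm_eq τ₁ hk
  obtain ⟨π₂, rfl⟩ := exists_assignmentOfPerm_eq τ₂ (h.symm.trans hk)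
  have hmax : ∀ σ, IsOptimalAssignment (augmentedWeight v α) (assignmentOfPerm k σ) →
      ∀ π : Perm (Fin m), ∑ i, v (π i) (k.succAbove i) ≤ ∑ i, v (σ i) (k.succAbove i) :=
    fun σ hσ π => by
      have := hσ (assignmentOfPerm k π)
      simp only [sum_augmentedWeight, sum_assignmentOfPerm_some, assignmentOfPerm_none] at this
      linarith
  rw [(hgen k).unique (hmax π₁ h₁) (hmax π₂ h₂)]

end Uniqueness

section Real

variable {m : ℕ} {v : Fin m → Fin (m + 1) → ℝ} {α : Fin (m + 1) → ℝ}

theorem IsOptimalAssignment.exists_augmentedWeight_apply_none_eq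
    (hgen : InGeneralPosition v)
    (hmem : ∀ ℓ, v ℓ ∈ realTropHyperplane α)
    {τ : Option (Fin m) ≃ Fin (m + 1)} (hτ : IsOptimalAssignment (augmentedWeight v α) τ)
    (ℓ : Fin m) :
    ∃ τ', IsOptimalAssignment (augmentedWeight v α) τ' ∧ τ' none = τ (some ℓ) ∧
      ∀ l, α l + v ℓ l ≤ α (τ (some ℓ)) + v ℓ (τ (some ℓ)) := by
  choose i j hij heq hmax using hmem
  set u : Option (Fin m) → ℝ := fun x => x.elim 0 fun ℓ => α (i ℓ) + v ℓ (i ℓ)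
  have hfeas : ∀ x k, augmentedWeight v α x k + α k ≤ u x := by
    rintro (_ | ℓ) k
    · simp [augmentedWeight, u]
    · simpa [augmentedWeight, u, add_comm] using hmax ℓ k
  have htwo : ∀ x, x ≠ none → ∀ k, ∃ k', k' ≠ k ∧ augmentedWeight v α x k' + α k' = u x := by
    rintro (_ | ℓ) hx k
    · exact absurd rfl hx
    by_cases hk : i ℓ = k
    · exact ⟨j ℓ, hk ▸ (hij ℓ).symm, by simp [augmentedWeight, u, heq, add_comm]⟩
    · exact ⟨i ℓ, hk, by simp [augmentedWeight, u, add_comm]⟩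
  obtain ⟨τ', hτ', hτ'none, htight⟩ := hτ.exists_apply_eq hfeas (by simp [augmentedWeight, u])
    htwo (fun _ _ h₁ h₂ h => h₁.eq_of_apply_none_eq hgen h₂ h) (Option.some_ne_none ℓ)
  refine ⟨τ', hτ', hτ'none, fun l => ?_⟩
  simp only [augmentedWeight, u, Option.elim_some] at htight
  linarith [hmax ℓ l]

theorem exists_isOptimalAssignment_augmentedWeight_apply_none_eq
    (hgen : InGeneralPosition v)
    (hmem : ∀ ℓ, v ℓ ∈ realTropHyperplane α) (k : Fin (m + 1)) :
    ∃ τ, IsOptimalAssignment (augmentedWeight v α) τ ∧ τ none = k := by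
  have : Nonempty (Option (Fin m) ≃ Fin (m + 1)) := ⟨assignmentOfPerm 0 1⟩
  obtain ⟨τ, hτ⟩ : ∃ τ, IsOptimalAssignment (augmentedWeight v α) τ :=
    Finite.exists_max fun τ : Option (Fin m) ≃ Fin (m + 1) => ∑ x, augmentedWeight v α x (τ x)
  obtain hk | ⟨ℓ, hℓ⟩ := Option.eq_none_or_eq_some (τ.symm k)
  · exact ⟨τ, hτ, τ.symm_apply_eq.1 hk |>.symm⟩
  · obtain ⟨τ', hτ', hτ'none, -⟩ := hτ.exists_augmentedWeight_apply_none_eq hgen hmem ℓ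
    exact ⟨τ', hτ', hτ'none.trans (τ.symm_apply_eq.1 hℓ).symm⟩

theorem exists_forall_eq_tropMinor_add
    (hgen : InGeneralPosition v)
    (hmem : ∀ ℓ, v ℓ ∈ realTropHyperplane α) : ∃ c, ∀ k, α k = tropMinor v k + c := by
  obtain ⟨τ₀, hτ₀, -⟩ := exists_isOptimalAssignment_augmentedWeight_apply_none_eq hgen hmem 0
  refine ⟨-∑ x, augmentedWeight v α x (τ₀ x), fun k => ?_⟩
  obtain ⟨τ, hτ, rfl⟩ := exists_isOptimalAssignment_augmentedWeight_apply_none_eq hgen hmem k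
  linarith [hτ τ₀, hτ₀ τ, hτ.sum_augmentedWeight_eq]

theorem exists_forall_add_le_of_ne
    (hgen : InGeneralPosition v)
    (hmem : ∀ ℓ, v ℓ ∈ realTropHyperplane α) {k w : Fin (m + 1)} (hkw : k ≠ w) :
    ∃ ℓ, ∀ l, α l + v ℓ l ≤ α k + v ℓ k := by
  obtain ⟨τ, hτ, hτw⟩ := exists_isOptimalAssignment_augmentedWeight_apply_none_eq hgen hmem w
  obtain ⟨ℓ, hℓ⟩ := Option.ne_none_iff_exists'.1 fun h : τ.symm k = none =>
    hkw (τ.symm_apply_eq.1 h |>.trans hτw)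
  obtain ⟨-, -, -, hmax⟩ := hτ.exists_augmentedWeight_apply_none_eq hgen hmem ℓ
  rw [← τ.symm_apply_eq.1 hℓ] at hmax
  exact ⟨ℓ, hmax⟩

end Real

theorem exists_eq_coe_of_coe_mem_tropHyperplane {n : ℕ} {a : Fin n → WithBot ℝ} {x : Fin n → ℝ}
    {w : Fin n} (hw : a w ≠ ⊥) (hx : (fun i => (x i : WithBot ℝ)) ∈ tropHyperplane a) :
    ∃ (i j : Fin n) (M : ℝ), i ≠ j ∧ a i + x i = M ∧ a j + x j = M ∧ ∀ l, a l + x l ≤ M := by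
  obtain ⟨i, j, hij, heq, hmax⟩ := hx
  have hw' : a w + x w ≤ a i + x i := hmax w
  have hne : a i + (x i : WithBot ℝ) ≠ ⊥ := fun h => by
    rw [h, le_bot_iff, WithBot.add_eq_bot] at hw'
    exact hw'.elim hw WithBot.coe_ne_bot
  obtain ⟨M, hM⟩ := WithBot.ne_bot_iff_exists.1 hne
  exact ⟨i, j, M, hij, hM.symm, heq ▸ hM.symm, fun l => hM ▸ hmax l⟩

theorem exists_eq_coe_tropMinor_add {m : ℕ} {v : Fin m → Fin (m + 1) → ℝ}
    (hgen : InGeneralPosition v)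
    {a : Fin (m + 1) → WithBot ℝ} {w : Fin (m + 1)} (hw : a w ≠ ⊥)
    (hmem : ∀ ℓ, (fun i => (v ℓ i : WithBot ℝ)) ∈ tropHyperplane a) :
    ∃ c : ℝ, a = fun k => (tropMinor v k : WithBot ℝ) + c := by
  choose i j M hij hi hj hmax using fun ℓ => exists_eq_coe_of_coe_mem_tropHyperplane hw (hmem ℓ)
  obtain ⟨L, hL⟩ : ∃ L : ℝ, ∀ ℓ l, L < M ℓ - v ℓ l :=
    (Filter.eventually_all.2 fun ℓ => Filter.eventually_all.2 fun l =>
      Filter.eventually_lt_atBot (M ℓ - v ℓ l)).exists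
  -- a coefficient `⊥` becomes `L`, which is too small to be tight for any point
  set α : Fin (m + 1) → ℝ := fun k => (a k).unbotD L
  have hα : ∀ l, a l = α l ∨ a l = ⊥ ∧ ∀ ℓ, α l + v ℓ l < M ℓ := by
    intro l
    cases h : a l with
    | bot => exact Or.inr ⟨rfl, fun ℓ => by simp only [α, h, WithBot.unbotD_bot]; linarith [hL ℓ l]⟩
    | coe x => exact Or.inl (by simp [α, h])
  have hreal : ∀ ℓ l, a l + v ℓ l = M ℓ → α l + v ℓ l = M ℓ := fun ℓ l h => by
    rcases hα l with hl | ⟨hl, -⟩ <;> rw [hl] at h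
    · exact_mod_cast h
    · simp at h
  have hαmem : ∀ ℓ, v ℓ ∈ realTropHyperplane α := fun ℓ => by
    refine ⟨i ℓ, j ℓ, hij ℓ, (hreal ℓ _ (hi ℓ)).trans (hreal ℓ _ (hj ℓ)).symm, fun l => ?_⟩
    rw [hreal ℓ _ (hi ℓ)]
    rcases hα l with hl | ⟨-, hl⟩
    · exact_mod_cast hl ▸ hmax ℓ l
    · exact (hl ℓ).le
  have hfin : ∀ k, a k = α k := fun k => by
    rcases hα k with hk | ⟨hk, hlt⟩
    · exact hk
    obtain ⟨ℓ, hℓ⟩ := exists_forall_add_le_of_ne hgen hαmem fun hkw : k = w => hw (hkw ▸ hk)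
    linarith [hℓ (i ℓ), hreal ℓ _ (hi ℓ), hlt ℓ]
  obtain ⟨c, hc⟩ := exists_forall_eq_tropMinor_add hgen hαmem
  exact ⟨c, funext fun k => by rw [hfin, hc, WithBot.coe_add]⟩

/-- Tropical Cramer theorem, "complex" version: `m` vectors of `ℝ^{m+1}` in general
position are contained in a unique tropical hyperplane. -/
theorem stmt0 (m : ℕ) (v : Fin m → Fin (m + 1) → ℝ)
    (hgen : ∀ k : Fin (m + 1), ∃! σ : Equiv.Perm (Fin m),
      ∀ π : Equiv.Perm (Fin m),
        ∑ i, v (π i) (k.succAbove i) ≤ ∑ i, v (σ i) (k.succAbove i)) :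
    ∃! H : Set (Fin (m + 1) → WithBot ℝ),
      (∃ a : Fin (m + 1) → WithBot ℝ, (∃ i, a i ≠ ⊥) ∧ H = tropHyperplane a) ∧
      ∀ ℓ : Fin m, (fun i => ((v ℓ i : ℝ) : WithBot ℝ)) ∈ H := by
  refine ⟨tropHyperplane fun k => (tropMinor v k : WithBot ℝ),
    ⟨⟨_, ⟨0, WithBot.coe_ne_bot⟩, rfl⟩,
      fun ℓ => coe_mem_tropHyperplane (mem_realTropHyperplane_tropMinor v ℓ)⟩, ?_⟩
  rintro H ⟨⟨a, ⟨w, hw⟩, rfl⟩, hmem⟩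
  obtain ⟨c, rfl⟩ := exists_eq_coe_tropMinor_add hgen hw hmem
  exact tropHyperplane_add_const _ c
end

section
/- A collection of n vectors v^1,…,v^n ∈ ℝ^n is contained in some tropical hyperplane if and only if the n×n real matrix A whose columns are v^1,…,v^n is tropically singular, i.e., the maximum max_{σ∈S_n} Σ_{i∈[n]} A_{iσ(i)} over all permutations σ of [n] is attained by at least two distinct permutations. -/
/-!
Call `∑ i, v (ρ i) i` the weight of the assignment `ρ`. If the points lie on `H(a)`, the
coefficients `a i = ⊥` can be replaced by reals small enough that in every column `j` the maximum
of `α i + v j i` is still attained twice. For an optimal `σ`, every row `i` then has a second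
maximizing row `g i ≠ i` for the column `σ i`; on the periodic points of `g` these choices form a
permutation `e ≠ 1`, and `σ * e⁻¹` is again optimal because the potentials `α` cancel along `e`.

Conversely, if `σ ≠ π` are optimal and `σ i₀ ≠ π i₀`, let `α i` be the tropical cofactor of the
entry `(i, j₀)`, `j₀ = σ i₀`: the best weight of an assignment sending `i` to `j₀`, minus `v j₀ i`.
In column `j₀` the maximum of `α i + v j₀ i` is the optimal weight, attained at `i₀` and at
`π⁻¹ j₀`. In any other column `j` it is the optimal weight of the matrix whose column `j₀` is
replaced by column `j`; that matrix has two equal columns, so swapping them in an optimal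
assignment shows that the maximum is attained twice.
-/

open Finset

theorem Function.periodicPts_nonempty {α : Type*} [Finite α] [Nonempty α] (f : α → α) :
    (Function.periodicPts f).Nonempty := by
  obtain ⟨x⟩ := ‹Nonempty α›
  obtain ⟨m, n, heq, hne⟩ : ∃ m n, f^[m] x = f^[n] x ∧ m ≠ n := by
    simpa [Function.Injective] using not_injective_infinite_finite (f^[·] x)
  wlog hmn : m < n generalizing m n
  · exact this n m heq.symm hne.symm (by omega)
  refine ⟨f^[m] x, Function.mk_mem_periodicPts (n := n - m) (by omega) ?_⟩
  rw [Function.IsPeriodicPt, Function.IsFixedPt, ← Function.iterate_add_apply,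
    Nat.sub_add_cancel hmn.le, heq]

theorem Equiv.Perm.exists_ne_one_forall_apply_eq_or_eq {α : Type*} [Finite α] [Nonempty α]
    (g : α → α) (hg : ∀ i, g i ≠ i) : ∃ e : Equiv.Perm α, e ≠ 1 ∧ ∀ i, e i = i ∨ e i = g i := by
  classical
  let e : Equiv.Perm α := Equiv.Perm.ofSubtype ((Function.bijOn_periodicPts g).equiv g)
  obtain ⟨x, hx⟩ := Function.periodicPts_nonempty g
  have he : ∀ i ∈ Function.periodicPts g, e i = g i := fun i hi =>
    Equiv.Perm.ofSubtype_apply_of_mem _ hi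
  refine ⟨e, fun h => hg x ?_, fun i => ?_⟩
  · rw [← he x hx, h, Equiv.Perm.one_apply]
  · by_cases hi : i ∈ Function.periodicPts g
    · exact .inr (he i hi)
    · exact .inl (Equiv.Perm.ofSubtype_apply_of_not_mem _ hi)

def MaxAttainedTwice {ι β : Type*} [LinearOrder β] (f : ι → β) : Prop :=
  ∃ i j, i ≠ j ∧ f i = f j ∧ ∀ l, f l ≤ f i

namespace MaxAttainedTwice

variable {ι β : Type*} [LinearOrder β] {f : ι → β}

theorem exists_ne_isMax (h : MaxAttainedTwice f) (k : ι) : ∃ i ≠ k, ∀ l, f l ≤ f i := by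
  obtain ⟨i, j, hij, hfij, hmax⟩ := h
  by_cases hik : i = k
  · exact ⟨j, hik ▸ hij.symm, fun l => hfij ▸ hmax l⟩
  · exact ⟨i, hik, hmax⟩

theorem of_forall_exists_ne_le [Finite ι] [Nonempty ι] (h : ∀ k, ∃ i ≠ k, f k ≤ f i) :
    MaxAttainedTwice f := by
  obtain ⟨i, hi⟩ := Finite.exists_max f
  obtain ⟨j, hji, hij⟩ := h i
  exact ⟨i, j, hji.symm, le_antisymm hij (hi j), hi⟩

end MaxAttainedTwice

theorem coe_mem_tropHyperplane_coe_iff {n : ℕ} (α x : Fin n → ℝ) :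
    (fun i => (x i : WithBot ℝ)) ∈ tropHyperplane (fun i => (α i : WithBot ℝ)) ↔
      MaxAttainedTwice fun i => α i + x i := by
  simp only [tropHyperplane, MaxAttainedTwice, Set.mem_ofPred_eq, ← WithBot.coe_add,
    WithBot.coe_inj, WithBot.coe_le_coe]

theorem exists_real_of_forall_mem_tropHyperplane {ι : Type*} [Finite ι] {n : ℕ}
    {a : Fin n → WithBot ℝ} (ha : ∃ i, a i ≠ ⊥) {x : ι → Fin n → ℝ}
    (hx : ∀ j, (fun i => (x j i : WithBot ℝ)) ∈ tropHyperplane a) :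
    ∃ α : Fin n → ℝ, ∀ j, MaxAttainedTwice fun i => α i + x j i := by
  obtain ⟨i₀, r₀, hr₀⟩ : ∃ (i₀ : Fin n) (r₀ : ℝ), a i₀ = r₀ := by
    obtain ⟨i₀, h⟩ := ha
    obtain ⟨r₀, hr₀⟩ := WithBot.ne_bot_iff_exists.1 h
    exact ⟨i₀, r₀, hr₀.symm⟩
  -- `c` replaces the coefficients `⊥`; every column maximum is at least `r₀ + x j i₀`
  obtain ⟨c, hc⟩ : ∃ c : ℝ, ∀ j l, c ≤ r₀ + x j i₀ - x j l := by
    obtain ⟨c, hc⟩ := (Set.finite_range fun p : ι × Fin n => r₀ + x p.1 i₀ - x p.1 p.2).bddBelow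
    exact ⟨c, fun j l => hc ⟨(j, l), rfl⟩⟩
  refine ⟨fun i => (a i).unbotD c, fun j => ?_⟩
  obtain ⟨i, i', hii', heq, hmax⟩ := hx j
  dsimp only at heq hmax
  obtain ⟨r, hr⟩ : ∃ r : ℝ, a i = r := by
    cases h : a i with
    | bot => simpa [h, hr₀, ← WithBot.coe_add] using hmax i₀
    | coe r => exact ⟨r, rfl⟩
  obtain ⟨r', hr'⟩ : ∃ r' : ℝ, a i' = r' := by
    cases h : a i' with
    | bot => simp [h, hr, ← WithBot.coe_add] at heq
    | coe r' => exact ⟨r', rfl⟩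
  have hmax₀ : r₀ + x j i₀ ≤ r + x j i := by
    have := hmax i₀
    rw [hr₀, hr] at this
    exact_mod_cast this
  refine ⟨i, i', hii', ?_, fun l => ?_⟩ <;> dsimp only <;> rw [hr, WithBot.unbotD_coe]
  · rw [hr, hr'] at heq
    rw [hr', WithBot.unbotD_coe]
    exact_mod_cast heq
  · cases h : a l with
    | bot =>
      rw [WithBot.unbotD_bot]
      linarith [hc j l]
    | coe s =>
      have := hmax l
      rw [h, hr] at this
      rw [WithBot.unbotD_coe]
      exact_mod_cast this

theorem sum_le_sum_perm_of_le_add {ι : Type*} [Fintype ι] (c : ι → ι → ℝ) (α : ι → ℝ)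
    (e : Equiv.Perm ι) (h : ∀ i, α i + c i i ≤ α (e i) + c i (e i)) :
    ∑ i, c i i ≤ ∑ i, c i (e i) := by
  have := Finset.sum_le_sum fun i (_ : i ∈ univ) => h i
  rw [sum_add_distrib, sum_add_distrib, Equiv.sum_comp e α] at this
  linarith

section Assignment

variable {ι : Type*} [Fintype ι] (v : ι → ι → ℝ)

def permWeight (ρ : Equiv.Perm ι) : ℝ := ∑ i, v (ρ i) i

variable {v} in
theorem exists_perm_ne_permWeight_eq [Nonempty ι] {α : ι → ℝ}
    (hα : ∀ j, MaxAttainedTwice fun i => α i + v j i) {σ : Equiv.Perm ι}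
    (hσ : ∀ ρ, permWeight v ρ ≤ permWeight v σ) :
    ∃ π ≠ σ, permWeight v π = permWeight v σ := by
  choose g hg hgmax using fun i => (hα (σ i)).exists_ne_isMax i
  obtain ⟨e, he₁, he⟩ := Equiv.Perm.exists_ne_one_forall_apply_eq_or_eq g hg
  refine ⟨σ * e⁻¹, fun h => he₁ (by simpa using h), le_antisymm (hσ _) ?_⟩
  have hreindex : permWeight v (σ * e⁻¹) = ∑ i, v (σ i) (e i) := by
    rw [permWeight, ← Equiv.sum_comp e]
    simp
  rw [hreindex]
  refine sum_le_sum_perm_of_le_add (fun i l => v (σ i) l) α e fun i => ?_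
  rcases he i with h | h
  · rw [h]
  · exact h ▸ hgmax i i

variable [DecidableEq ι]

theorem permWeight_mul_swap (ρ : Equiv.Perm ι) (a b : ι) :
    permWeight v (ρ * Equiv.swap a b) =
      permWeight v ρ - v (ρ a) a - v (ρ b) b + v (ρ a) b + v (ρ b) a := by
  by_cases hab : a = b
  · subst hab
    simp only [Equiv.swap_self, ← Equiv.Perm.one_def, mul_one]
    ring
  have hdiff : ∑ i, (v ((ρ * Equiv.swap a b) i) i - v (ρ i) i) =
      (v (ρ b) a - v (ρ a) a) + (v (ρ a) b - v (ρ b) b) := by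
    rw [Fintype.sum_eq_add a b hab fun i hi => by
      simp [Equiv.swap_apply_of_ne_of_ne hi.1 hi.2]]
    simp
  rw [sum_sub_distrib] at hdiff
  unfold permWeight
  linarith

noncomputable def maxPermWeightWith (i j : ι) : ℝ :=
  (univ.filter fun ρ : Equiv.Perm ι => ρ i = j).sup'
    ⟨Equiv.swap i j, by simp⟩ (permWeight v)

variable {v}

theorem permWeight_le_maxPermWeightWith {ρ : Equiv.Perm ι} {i j : ι} (h : ρ i = j) :
    permWeight v ρ ≤ maxPermWeightWith v i j :=
  le_sup' (permWeight v) (by simpa using h)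

theorem exists_permWeight_eq_maxPermWeightWith (i j : ι) :
    ∃ ρ : Equiv.Perm ι, ρ i = j ∧ permWeight v ρ = maxPermWeightWith v i j := by
  obtain ⟨ρ, hρ, heq⟩ := exists_mem_eq_sup' (s := univ.filter fun ρ : Equiv.Perm ι => ρ i = j)
    ⟨Equiv.swap i j, by simp⟩ (permWeight v)
  exact ⟨ρ, (mem_filter.1 hρ).2, heq.symm⟩

theorem maxPermWeightWith_le {σ : Equiv.Perm ι} (hσ : ∀ ρ, permWeight v ρ ≤ permWeight v σ)
    (i j : ι) : maxPermWeightWith v i j ≤ permWeight v σ := by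
  obtain ⟨ρ, -, hρ⟩ := exists_permWeight_eq_maxPermWeightWith (v := v) i j
  exact hρ ▸ hσ ρ

theorem maxPermWeightWith_apply_eq {σ : Equiv.Perm ι}
    (hσ : ∀ ρ, permWeight v ρ ≤ permWeight v σ) (i : ι) :
    maxPermWeightWith v i (σ i) = permWeight v σ :=
  le_antisymm (maxPermWeightWith_le hσ i _) (permWeight_le_maxPermWeightWith rfl)

theorem exists_ne_maxPermWeightWith_sub_add_le {j₀ j : ι} (hj : j ≠ j₀) (k : ι) :
    ∃ l ≠ k, maxPermWeightWith v k j₀ - v j₀ k + v j k ≤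
      maxPermWeightWith v l j₀ - v j₀ l + v j l := by
  obtain ⟨ρ, hρk, hρ⟩ := exists_permWeight_eq_maxPermWeightWith (v := v) k j₀
  refine ⟨ρ.symm j, fun h => hj (by rw [← hρk, ← h, Equiv.apply_symm_apply]), ?_⟩
  have hswap := permWeight_le_maxPermWeightWith (v := v) (ρ := ρ * Equiv.swap k (ρ.symm j))
    (i := ρ.symm j) (j := j₀) (by simp [hρk])
  rw [permWeight_mul_swap, hρk, Equiv.apply_symm_apply, hρ] at hswap
  linarith

theorem exists_maxAttainedTwice_of_permWeight_eq {σ π : Equiv.Perm ι} (hne : σ ≠ π)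
    (hσ : ∀ ρ, permWeight v ρ ≤ permWeight v σ) (hπ : permWeight v π = permWeight v σ) :
    ∃ α : ι → ℝ, ∀ j, MaxAttainedTwice fun i => α i + v j i := by
  obtain ⟨i₀, hi₀⟩ := not_forall.1 (mt Equiv.ext hne)
  have : Nonempty ι := ⟨i₀⟩
  refine ⟨fun i => maxPermWeightWith v i (σ i₀) - v (σ i₀) i, fun j => ?_⟩
  by_cases hj : j = σ i₀
  · subst hj
    simp only [sub_add_cancel]
    refine ⟨i₀, π.symm (σ i₀), fun h => hi₀ (π.symm_apply_eq.1 h.symm), ?_, fun l => ?_⟩ <;>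
      dsimp only
    · rw [maxPermWeightWith_apply_eq hσ, ← hπ,
        ← maxPermWeightWith_apply_eq (hπ ▸ hσ) (π.symm (σ i₀)), Equiv.apply_symm_apply]
    · rw [maxPermWeightWith_apply_eq hσ]
      exact maxPermWeightWith_le hσ l _
  · exact .of_forall_exists_ne_le (exists_ne_maxPermWeightWith_sub_add_le hj)

end Assignment

/-- `n` vectors of `ℝ^n` are contained in a tropical hyperplane iff the matrix having
these vectors as columns is tropically singular (the associated optimal assignment
problem has at least two optimal permutations). -/
theorem stmt1 (n : ℕ) (v : Fin n → Fin n → ℝ) :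
    (∃ a : Fin n → WithBot ℝ, (∃ i, a i ≠ ⊥) ∧
        ∀ j : Fin n, (fun i => ((v j i : ℝ) : WithBot ℝ)) ∈ tropHyperplane a) ↔
    (∃ σ π : Equiv.Perm (Fin n), σ ≠ π ∧
        (∀ ρ : Equiv.Perm (Fin n), ∑ i, v (ρ i) i ≤ ∑ i, v (σ i) i) ∧
        ∑ i, v (π i) i = ∑ i, v (σ i) i) := by
  constructor
  · rintro ⟨a, ha, hv⟩
    obtain ⟨α, hα⟩ := exists_real_of_forall_mem_tropHyperplane ha hv
    have : Nonempty (Fin n) := ha.nonempty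
    obtain ⟨σ, hσ⟩ := Finite.exists_max (permWeight v)
    obtain ⟨π, hπσ, hπ⟩ := exists_perm_ne_permWeight_eq hα hσ
    exact ⟨σ, π, hπσ.symm, hσ, hπ⟩
  · rintro ⟨σ, π, hne, hσ, hπ⟩
    obtain ⟨α, hα⟩ := exists_maxAttainedTwice_of_permWeight_eq hne hσ hπ
    obtain ⟨i, -⟩ := not_forall.1 (mt Equiv.ext hne)
    exact ⟨fun i => α i, ⟨i, WithBot.coe_ne_bot⟩,
      fun j => (coe_mem_tropHyperplane_coe_iff α (v j)).2 (hα j)⟩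
end

section
/- Let R be an idempotent semiring and let A ∈ M_n(R) be a matrix with A_{11} = ⋯ = A_{nn} = 1 and per A = 1, where per A = Σ_{σ∈S_n} A_{1σ(1)}⋯A_{nσ(n)} is the permanent. Then every circuit of A has weight less than or equal to 1 (for every sequence i_0,…,i_k in [n] with k ≥ 1 and i_k = i_0, the product A_{i_0 i_1}⋯A_{i_{k-1} i_k} ≤ 1 in the natural order), and the adjugate of A equals its Kleene star: A^adj = A* := I + A + ⋯ + A^{n-1}, where (A^adj)_{ij} := per A(j,i) and A(j,i) is the (n-1)×(n-1) submatrix of A obtained by deleting row j and column i. -/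
open Finset

/-- The permanent of a matrix over a commutative semiring. -/
def perm {R : Type*} [CommSemiring R] {n : ℕ} (A : Matrix (Fin n) (Fin n) R) : R :=
  ∑ σ : Equiv.Perm (Fin n), ∏ i, A i (σ i)

/-!
Every term of `per A` is at most `per A = 1`. A simple circuit, or a simple path from `i` to `j`
closed up by the deleted entry `(j, i)`, is a cycle of a permutation fixing all other points; as
the diagonal is `1`, its weight is a term of `per A`, resp. of `per A(j,i)`. A walk that is not
simple splits at a repeated vertex into a shorter walk and a circuit of weight `≤ 1`, so every
walk from `i` to `j` weighs at most `per A(j,i)`, whence `A^k ≤ A^adj` for all `k`. Conversely,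
a term of `per A(j,i)` comes from a permutation `σ` with `σ j = i`: following `σ` from `i` back
to `j` is a path of length at most `n`, and the other cycles of `σ` contribute a factor `≤ 1`.
-/

open Equiv Function

section Walks

variable {ι R : Type*} [CommMonoid R]

def walkWeight (A : Matrix ι ι R) (p : ℕ → ι) (k : ℕ) : R :=
  ∏ t ∈ range k, A (p t) (p (t + 1))

theorem walkWeight_succ (A : Matrix ι ι R) (p : ℕ → ι) (k : ℕ) :
    walkWeight A p (k + 1) = walkWeight A p k * A (p k) (p (k + 1)) :=
  prod_range_succ _ _

theorem walkWeight_congr (A : Matrix ι ι R) {p q : ℕ → ι} {k : ℕ} (h : ∀ t ≤ k, p t = q t) :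
    walkWeight A p k = walkWeight A q k :=
  prod_congr rfl fun t ht => by rw [h t (mem_range.1 ht).le, h (t + 1) (mem_range.1 ht)]

def dropSegment (p : ℕ → ι) (a d : ℕ) (t : ℕ) : ι :=
  if t ≤ a then p t else p (t + d)

theorem dropSegment_of_le (p : ℕ → ι) {a t : ℕ} (d : ℕ) (ht : t ≤ a) :
    dropSegment p a d t = p t :=
  if_pos ht

theorem dropSegment_add (p : ℕ → ι) {a d : ℕ} (h : p (a + d) = p a) (x : ℕ) :
    dropSegment p a d (a + x) = p (a + d + x) := by
  rcases x with _ | x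
  · simp [dropSegment, h]
  · rw [dropSegment, if_neg (by omega)]
    congr 1
    omega

theorem walkWeight_eq_dropSegment_mul (A : Matrix ι ι R) (p : ℕ → ι) {a d : ℕ}
    (h : p (a + d) = p a) (e : ℕ) :
    walkWeight A p (a + d + e) =
      walkWeight A (dropSegment p a d) (a + e) * walkWeight A (fun t => p (a + t)) d := by
  have h₁ : ∀ t ∈ range a,
      A (dropSegment p a d t) (dropSegment p a d (t + 1)) = A (p t) (p (t + 1)) := fun t ht => by
    rw [dropSegment_of_le p d (mem_range.1 ht).le, dropSegment_of_le p d (mem_range.1 ht)]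
  have h₂ : ∀ x ∈ range e, A (dropSegment p a d (a + x)) (dropSegment p a d (a + x + 1)) =
      A (p (a + d + x)) (p (a + d + x + 1)) := fun x _ => by
    rw [dropSegment_add p h, add_assoc a x 1, dropSegment_add p h]
    simp only [add_assoc]
  simp only [walkWeight, prod_range_add, ← add_assoc]
  rw [prod_congr rfl h₁, prod_congr rfl h₂, mul_right_comm]

theorem exists_repeat_of_not_injOn {p : ℕ → ι} {k : ℕ} (h : ¬ Set.InjOn p (Set.Iio k)) :
    ∃ a d, 0 < d ∧ a + d < k ∧ p (a + d) = p a := by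
  simp only [Set.InjOn, Set.mem_Iio, not_forall] at h
  obtain ⟨s, hs, t, ht, hst, hne⟩ := h
  rcases Nat.lt_or_gt_of_ne hne with hlt | hlt
  · exact ⟨s, t - s, by omega, by omega, by rw [Nat.add_sub_cancel' hlt.le, hst]⟩
  · exact ⟨t, s - t, by omega, by omega, by rw [Nat.add_sub_cancel' hlt.le, hst]⟩

variable [DecidableEq ι]

theorem exists_perm_of_injOn {p : ℕ → ι} {k : ℕ} (hinj : Set.InjOn p (Set.Iio k)) :
    ∃ σ : Perm ι, (∀ t < k, σ (p t) = p ((t + 1) % k)) ∧ ∀ r ∉ (range k).image p, σ r = r := by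
  set l := (List.range k).map p
  have hnd : l.Nodup := List.nodup_range.map_on fun s hs t ht hst =>
    hinj (Set.mem_Iio.2 (List.mem_range.1 hs)) (Set.mem_Iio.2 (List.mem_range.1 ht)) hst
  refine ⟨l.formPerm, fun t ht => ?_, fun r hr => List.formPerm_apply_of_notMem ?_⟩
  · have := List.formPerm_apply_getElem l hnd t (by simpa [l] using ht)
    simpa [l] using this
  · simpa [l] using hr

theorem prod_eq_walkWeight_mul_prod_sdiff (A : Matrix ι ι R) (f : ι → ι) {p : ℕ → ι} {k : ℕ}
    (hinj : Set.InjOn p (Set.Iio k)) (hf : ∀ t < k, f (p t) = p (t + 1)) {s : Finset ι}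
    (hs : (range k).image p ⊆ s) :
    ∏ r ∈ s, A r (f r) = walkWeight A p k * ∏ r ∈ s \ (range k).image p, A r (f r) := by
  rw [← prod_sdiff hs, mul_comm, prod_image (by rwa [coe_range])]
  exact congrArg (· * _) (prod_congr rfl fun t ht => by rw [hf t (mem_range.1 ht)])

end Walks

theorem sdiff_image_iterate_eq_filter_not_sameCycle {ι : Type*} [Fintype ι] [DecidableEq ι]
    (σ : Perm ι) (j : ι) :
    {j}ᶜ \ (range (minimalPeriod σ j - 1)).image (fun t => σ^[t + 1] j) =
      univ.filter (¬ σ.SameCycle j ·) := by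
  have hm : 0 < minimalPeriod σ j :=
    minimalPeriod_pos_of_mem_periodicPts (σ.injective.mem_periodicPts j)
  ext r
  simp only [mem_sdiff, mem_compl, mem_singleton, mem_image, mem_range, mem_filter, mem_univ,
    true_and, not_exists, not_and]
  constructor
  · rintro ⟨hrj, hr⟩ hjr
    obtain ⟨t, ht⟩ := hjr.exists_nat_pow_eq
    rw [← Perm.iterate_eq_pow, ← iterate_mod_minimalPeriod_eq] at ht
    rcases Nat.eq_zero_or_pos (t % minimalPeriod σ j) with h0 | hpos
    · exact hrj (by rw [← ht, h0]; rfl)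
    · refine hr (t % minimalPeriod σ j - 1) (by have := Nat.mod_lt t hm; omega) ?_
      rwa [Nat.sub_add_cancel hpos]
  · intro hjr
    refine ⟨fun hrj => hjr (hrj ▸ Perm.SameCycle.refl σ j), fun t _ hqt => hjr ?_⟩
    rw [← hqt]
    exact ⟨(t + 1 : ℕ), by rw [zpow_natCast, ← Perm.iterate_eq_pow]⟩

theorem perm_submatrix_succAbove {R : Type*} [CommSemiring R] {n : ℕ}
    (A : Matrix (Fin (n + 1)) (Fin (n + 1)) R) (i j : Fin (n + 1)) :
    perm (A.submatrix j.succAbove i.succAbove) =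
      ∑ σ : Perm (Fin (n + 1)) with σ j = i, ∏ r ∈ {j}ᶜ, A r (σ r) := by
  -- `τ` corresponds to the permutation sending `j ↦ i` and `j.succAbove t ↦ i.succAbove (τ t)`
  refine sum_nbij' (fun τ => (finSuccEquiv' j).trans (τ.optionCongr.trans (finSuccEquiv' i).symm))
    (fun σ => removeNone (((finSuccEquiv' j).symm.trans σ).trans (finSuccEquiv' i)))
    (by simp) (by simp) (fun τ _ => ?_) (fun σ hσ => ?_) (fun τ _ => ?_)
  · simp [← Equiv.trans_assoc, Equiv.trans_assoc _ (finSuccEquiv' i).symm]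
  · ext r
    simp [(mem_filter.1 hσ).2]
  · rw [← Fin.image_succAbove_univ j, prod_image Fin.succAbove_right_injective.injOn]
    exact prod_congr rfl fun t _ => by simp

theorem Finset.sum_le_of_forall_le {α κ : Type*} [IdemSemiring α] {s : Finset κ} {f : κ → α}
    {c : α} (h : ∀ x ∈ s, f x ≤ c) : ∑ x ∈ s, f x ≤ c :=
  sum_induction f (· ≤ c) (fun _ _ => add_le) zero_le h

section Idempotent

variable {R : Type*} [IdemCommSemiring R]

section Powers

variable {ι : Type*} [Fintype ι] [DecidableEq ι] (A : Matrix ι ι R)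

theorem walkWeight_le_pow (p : ℕ → ι) (k : ℕ) : walkWeight A p k ≤ (A ^ k) (p 0) (p k) := by
  induction k with
  | zero => simp [walkWeight]
  | succ k ih =>
    rw [walkWeight_succ, pow_succ, Matrix.mul_apply]
    exact (mul_le_mul' ih le_rfl).trans (single_le_sum_of_canonicallyOrdered
      (f := fun x => (A ^ k) (p 0) x * A x (p (k + 1))) (mem_univ (p k)))

theorem pow_apply_le_of_forall_walkWeight_le {c : ι → ι → R}
    (h : ∀ k p, walkWeight A p k ≤ c (p 0) (p k)) (k : ℕ) (i j : ι) : (A ^ k) i j ≤ c i j := by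
  suffices key : ∀ k (q : ℕ → ι) m, walkWeight A q m * (A ^ k) (q m) j ≤ c (q 0) j by
    simpa [walkWeight] using key k (fun _ => i) 0
  intro k
  induction k with
  | zero =>
    intro q m
    rw [pow_zero, Matrix.one_apply]
    split_ifs with hqm
    · simpa [← hqm] using h m q
    · simp
  | succ k ih =>
    intro q m
    rw [pow_succ', Matrix.mul_apply, mul_sum]
    refine sum_le_of_forall_le fun x _ => ?_
    have hext : walkWeight A (update q (m + 1) x) (m + 1) = walkWeight A q m * A (q m) x := by
      rw [walkWeight_succ, walkWeight_congr A fun t ht => update_of_ne (by omega) _ _,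
        update_self, update_of_ne (by omega)]
    simpa [← mul_assoc, hext] using ih (update q (m + 1) x) (m + 1)

end Powers

section Permanent

variable {n : ℕ} (A : Matrix (Fin n) (Fin n) R)

theorem prod_le_perm (σ : Perm (Fin n)) : ∏ i, A i (σ i) ≤ perm A :=
  single_le_sum_of_canonicallyOrdered (f := fun σ : Perm (Fin n) => ∏ i, A i (σ i)) (mem_univ σ)

variable {A}

theorem prod_filter_le_perm (hdiag : ∀ i, A i i = 1) (σ : Perm (Fin n)) (P : Fin n → Prop)
    [DecidablePred P] (hP : ∀ r, P (σ r) ↔ P r) : ∏ r with P r, A r (σ r) ≤ perm A := by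
  set τ := Perm.ofSubtype (σ.subtypePerm hP)
  calc ∏ r with P r, A r (σ r) = ∏ r, A r (τ r) := by
        rw [← prod_filter_mul_prod_filter_not univ P,
          prod_eq_one (s := univ.filter (¬ P ·)) fun r hr => ?_, mul_one]
        · exact prod_congr rfl fun r hr => by
            rw [Perm.ofSubtype_subtypePerm_of_mem hP (mem_filter.1 hr).2]
        · rw [Perm.ofSubtype_subtypePerm_of_not_mem hP (mem_filter.1 hr).2, hdiag]
    _ ≤ perm A := prod_le_perm A τ

theorem walkWeight_le_perm_of_injOn (hdiag : ∀ i, A i i = 1) {k : ℕ} {p : ℕ → Fin n}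
    (hinj : Set.InjOn p (Set.Iio k)) (hpk : p k = p 0) : walkWeight A p k ≤ perm A := by
  obtain ⟨σ, hσ, hfix⟩ := exists_perm_of_injOn hinj
  have hσ' : ∀ t < k, σ (p t) = p (t + 1) := fun t ht => by
    rw [hσ t ht]
    rcases (show t + 1 ≤ k from ht).lt_or_eq with h | h
    · rw [Nat.mod_eq_of_lt h]
    · rw [h, Nat.mod_self, hpk]
  calc walkWeight A p k = ∏ r, A r (σ r) := by
        rw [prod_eq_walkWeight_mul_prod_sdiff A σ hinj hσ' (subset_univ _),
          prod_eq_one fun r hr => by rw [hfix r (mem_sdiff.1 hr).2, hdiag], mul_one]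
    _ ≤ perm A := prod_le_perm A σ

theorem walkWeight_le_one_of_circuit (hdiag : ∀ i, A i i = 1) (hper : perm A = 1) (k : ℕ)
    (p : ℕ → Fin n) (hk : 0 < k) (hpk : p k = p 0) : walkWeight A p k ≤ 1 := by
  induction k using Nat.strong_induction_on generalizing p with
  | _ k ih =>
    by_cases hinj : Set.InjOn p (Set.Iio k)
    · exact hper ▸ walkWeight_le_perm_of_injOn hdiag hinj hpk
    · obtain ⟨a, d, hd, hadk, hrep⟩ := exists_repeat_of_not_injOn hinj
      obtain ⟨e, rfl⟩ : ∃ e, k = a + d + e := ⟨k - (a + d), by omega⟩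
      rw [walkWeight_eq_dropSegment_mul A p hrep]
      refine mul_le_one' (ih _ (by omega) _ (by omega) ?_)
        (ih d (by omega) _ hd (by simpa using hrep))
      rw [dropSegment_add p hrep, dropSegment_of_le p d (Nat.zero_le a), hpk]

end Permanent

section Adjugate

variable {n : ℕ} {A : Matrix (Fin (n + 1)) (Fin (n + 1)) R}

theorem prod_compl_le_sum_pow (hdiag : ∀ i, A i i = 1) (hper : perm A = 1)
    (σ : Perm (Fin (n + 1))) {i j : Fin (n + 1)} (hσ : σ j = i) :
    ∏ r ∈ {j}ᶜ, A r (σ r) ≤ ∑ k ∈ range (n + 1), (A ^ k) i j := by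
  set m := minimalPeriod σ j
  have hm : 0 < m := minimalPeriod_pos_of_mem_periodicPts (σ.injective.mem_periodicPts j)
  have hmn : m ≤ n + 1 := by simpa using minimalPeriod_le_card (f := σ) (x := j)
  -- `q` runs along the cycle of `σ` through `j`, from `q 0 = i` to `q (m - 1) = j`
  set q : ℕ → Fin (n + 1) := fun t => σ^[t + 1] j
  have hinj : Set.InjOn q (Set.Iio (m - 1)) := fun s hs t ht hst => by
    have := iterate_injOn_Iio_minimalPeriod (f := σ) (x := j)
      (show s + 1 < m by have := Set.mem_Iio.1 hs; omega)
      (show t + 1 < m by have := Set.mem_Iio.1 ht; omega) hst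
    omega
  have hq : ∀ t < m - 1, σ (q t) = q (t + 1) := fun t _ => (iterate_succ_apply' σ (t + 1) j).symm
  have himg : (range (m - 1)).image q ⊆ {j}ᶜ := by
    intro r hr
    obtain ⟨t, ht, rfl⟩ := mem_image.1 hr
    rw [mem_compl, mem_singleton]
    exact not_isPeriodicPt_of_pos_of_lt_minimalPeriod (n := t + 1) (by omega)
      (by rw [mem_range] at ht; omega)
  have hq0 : q 0 = i := hσ
  have hqm : q (m - 1) = j := by
    simp only [q, Nat.sub_add_cancel hm]
    exact iterate_minimalPeriod
  rw [prod_eq_walkWeight_mul_prod_sdiff A σ hinj hq himg,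
    sdiff_image_iterate_eq_filter_not_sameCycle]
  calc _ ≤ walkWeight A q (m - 1) * 1 :=
        mul_le_mul' le_rfl (hper ▸ prod_filter_le_perm hdiag σ _
          fun r => not_congr Perm.sameCycle_apply_right)
    _ ≤ (A ^ (m - 1)) i j := by simpa [hq0, hqm] using walkWeight_le_pow A q (m - 1)
    _ ≤ ∑ k ∈ range (n + 1), (A ^ k) i j :=
        single_le_sum_of_canonicallyOrdered (f := fun k => (A ^ k) i j) (mem_range.2 (by omega))

theorem walkWeight_le_perm_submatrix_of_injOn (hdiag : ∀ i, A i i = 1) {k : ℕ}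
    {p : ℕ → Fin (n + 1)} (hinj : Set.InjOn p (Set.Iio (k + 1))) :
    walkWeight A p k ≤ perm (A.submatrix (p k).succAbove (p 0).succAbove) := by
  obtain ⟨σ, hσ, hfix⟩ := exists_perm_of_injOn hinj
  have hσ' : ∀ t < k, σ (p t) = p (t + 1) := fun t ht => by
    rw [hσ t (by omega), Nat.mod_eq_of_lt (by omega)]
  have hσk : σ (p k) = p 0 := by rw [hσ k (by omega), Nat.mod_self]
  have hk : p k ∉ (range k).image p := by
    simp only [mem_image, mem_range, not_exists, not_and]
    exact fun t ht hpt =>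
      ht.ne (hinj (Set.mem_Iio.2 (by omega)) (Set.mem_Iio.2 k.lt_succ_self) hpt)
  have hfix' : ∀ r ∈ {p k}ᶜ \ (range k).image p, σ r = r := fun r hr => hfix r (by
    rw [range_add_one, image_insert]
    simpa [mem_sdiff] using hr)
  calc walkWeight A p k = ∏ r ∈ {p k}ᶜ, A r (σ r) := by
        rw [prod_eq_walkWeight_mul_prod_sdiff A σ (hinj.mono (Set.Iio_subset_Iio k.le_succ))
          hσ' (fun r hr => mem_compl.2 fun h => hk (by rwa [← mem_singleton.1 h])),
          prod_eq_one fun r hr => by rw [hfix' r hr, hdiag], mul_one]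
    _ ≤ perm (A.submatrix (p k).succAbove (p 0).succAbove) := by
        rw [perm_submatrix_succAbove]
        exact single_le_sum_of_canonicallyOrdered
          (f := fun σ : Perm (Fin (n + 1)) => ∏ r ∈ {p k}ᶜ, A r (σ r))
          (mem_filter.2 ⟨mem_univ _, hσk⟩)

theorem walkWeight_le_perm_submatrix (hdiag : ∀ i, A i i = 1) (hper : perm A = 1) (k : ℕ)
    (p : ℕ → Fin (n + 1)) :
    walkWeight A p k ≤ perm (A.submatrix (p k).succAbove (p 0).succAbove) := by
  induction k using Nat.strong_induction_on generalizing p with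
  | _ k ih =>
    by_cases hinj : Set.InjOn p (Set.Iio (k + 1))
    · exact walkWeight_le_perm_submatrix_of_injOn hdiag hinj
    · obtain ⟨a, d, hd, hadk, hrep⟩ := exists_repeat_of_not_injOn hinj
      obtain ⟨e, rfl⟩ : ∃ e, k = a + d + e := ⟨k - (a + d), by omega⟩
      rw [walkWeight_eq_dropSegment_mul A p hrep]
      calc _ ≤ walkWeight A (dropSegment p a d) (a + e) * 1 :=
            mul_le_mul' le_rfl
              (walkWeight_le_one_of_circuit hdiag hper d _ hd (by simpa using hrep))
        _ ≤ _ := by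
            simpa [dropSegment_add p hrep, dropSegment_of_le p d (Nat.zero_le a)]
              using ih (a + e) (by omega) (dropSegment p a d)

end Adjugate

end Idempotent

/-- Yoeli's theorem: over an idempotent (commutative) semiring, if `A` has unit diagonal
and unit permanent, then every circuit of `A` has weight at most `1` in the natural
order, and the adjugate of `A` (whose `(i,j)` entry is the permanent of `A` with row `j`
and column `i` deleted) equals the Kleene star `A^* = I + A + ⋯ + A^{n-1}`. -/
theorem stmt7 {R : Type*} [CommSemiring R] (hidem : ∀ a : R, a + a = a)
    (n : ℕ) (A : Matrix (Fin (n + 1)) (Fin (n + 1)) R)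
    (hdiag : ∀ i, A i i = 1) (hper : perm A = 1) :
    (∀ (k : ℕ) (p : ℕ → Fin (n + 1)), 0 < k → p k = p 0 →
      ((List.range k).map fun t => A (p t) (p (t + 1))).prod + 1 = 1) ∧
    ∀ i j : Fin (n + 1),
      perm (A.submatrix j.succAbove i.succAbove) =
        (∑ k ∈ Finset.range (n + 1), A ^ k) i j := by
  let : IdemCommSemiring R := { ‹CommSemiring R›, IdemSemiring.ofSemiring hidem with }
  refine ⟨fun k p hk hpk => add_eq_right_iff_le.2
    (walkWeight_le_one_of_circuit hdiag hper k p hk hpk), fun i j => le_antisymm ?_ ?_⟩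
  · rw [perm_submatrix_succAbove, Matrix.sum_apply]
    exact sum_le_of_forall_le fun σ hσ => prod_compl_le_sum_pow hdiag hper σ (mem_filter.1 hσ).2
  · rw [Matrix.sum_apply]
    exact sum_le_of_forall_le fun k _ => pow_apply_le_of_forall_walkWeight_le A
      (c := fun i j => perm (A.submatrix j.succAbove i.succAbove))
      (walkWeight_le_perm_submatrix hdiag hper) k i j
end

section
/- Let S be a commutative semiring with a symmetry τ and a thin set S^∨. Then S allows weak balance elimination (i.e., satisfies Property 1: S^∨∖{0} is closed under multiplication, and Property 2: for all n, p ≥ 1, a ∈ S^∨, C ∈ M_{n,p}(S), b ∈ S^p, d ∈ S^n, and x ∈ (S^∨)^p, if a·x ∇ b and C·x ∇ d entrywise then C·b ∇ a·d entrywise) if and only if Property 1 holds together with the scalar Property 2': for all b, c, d ∈ S and x ∈ S^∨, x ∇ b and c·x ∇ d imply c·b ∇ d. -/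
open Finset

variable {S : Type*}

/-- A symmetry of a commutative semiring `S` (written `-a := τ a`). -/
def IsSymmetry [CommSemiring S] (τ : S → S) : Prop :=
  (∀ a b, τ (a + b) = τ a + τ b) ∧ τ 0 = 0 ∧
  (∀ a b, τ (a * b) = a * τ b) ∧ ∀ a, τ (τ a) = a

/-- The set `S° = {a + τ a : a ∈ S}` of balanced elements. -/
def bSet [CommSemiring S] (τ : S → S) : Set S := {x | ∃ a, x = a + τ a}

/-- The balance relation: `x ∇ y ↔ x + τ y ∈ S°`. -/
def bal [CommSemiring S] (τ : S → S) (x y : S) : Prop := x + τ y ∈ bSet τ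

/-- `V` is a thin set: `V ⊆ (S ∖ S°) ∪ {0}`, `0 ∈ V`, and `V` contains all units. -/
def IsThin [CommSemiring S] (τ : S → S) (V : Set S) : Prop :=
  (0 : S) ∈ V ∧ (∀ x : S, IsUnit x → x ∈ V) ∧ ∀ x ∈ V, x = 0 ∨ x ∉ bSet τ

/-- `S` (with symmetry `τ` and thin set `V`) allows weak balance elimination:
`V ∖ {0}` is closed under multiplication, and the weak transitivity of systems of
balances holds. -/
def AllowsWeakElim [CommSemiring S] (τ : S → S) (V : Set S) : Prop :=
  (∀ x ∈ V, ∀ y ∈ V, x ≠ 0 → y ≠ 0 → x * y ∈ V ∧ x * y ≠ 0) ∧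
  ∀ (n p : ℕ) (a : S), a ∈ V → ∀ (C : Matrix (Fin n) (Fin p) S) (b : Fin p → S)
    (d : Fin n → S) (x : Fin p → S), (∀ j, x j ∈ V) →
    (∀ j, bal τ (a * x j) (b j)) → (∀ i, bal τ (∑ j, C i j * x j) (d i)) →
    ∀ i, bal τ (∑ j, C i j * b j) (a * d i)

/-- `S` allows strong balance elimination: weak balance elimination, plus the fact that
two balanced thin elements are equal. -/
def AllowsStrongElim [CommSemiring S] (τ : S → S) (V : Set S) : Prop :=
  AllowsWeakElim τ V ∧ ∀ x ∈ V, ∀ y ∈ V, bal τ x y → x = y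

/-- The sign of a permutation in `S`: `1` for even permutations and `-1 = τ 1` for odd
ones. -/
noncomputable def sgnS [CommSemiring S] (τ : S → S) {n : ℕ} (σ : Equiv.Perm (Fin n)) : S :=
  if Equiv.Perm.sign σ = 1 then 1 else τ 1

/-- `(-1)^k` in `S`: `1` for even `k` and `τ 1` for odd `k`. -/
def sgnPow [CommSemiring S] (τ : S → S) (k : ℕ) : S := if Even k then 1 else τ 1

/-- The determinant of a matrix over a commutative semiring with symmetry `τ`. -/
noncomputable def sdet [CommSemiring S] (τ : S → S) {n : ℕ}
    (A : Matrix (Fin n) (Fin n) S) : S :=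
  ∑ σ : Equiv.Perm (Fin n), sgnS τ σ * ∏ i, A i (σ i)

/-- The adjugate matrix: `(A^adj)_{ij} = (-1)^{i+j} · det A(j,i)`, where `A(j,i)` is the
submatrix of `A` with row `j` and column `i` deleted. -/
noncomputable def sadj [CommSemiring S] (τ : S → S) {n : ℕ}
    (A : Matrix (Fin (n + 1)) (Fin (n + 1)) S) : Matrix (Fin (n + 1)) (Fin (n + 1)) S :=
  Matrix.of fun i j =>
    sgnPow τ (i.val + j.val) * sdet τ (A.submatrix j.succAbove i.succAbove)

/-!
Balances can be multiplied by a scalar, and a term may be moved across a balance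
(`u + r ∇ e ↔ u ∇ e - r`). Hence a single balance `C x ∇ d`, multiplied by `a`, can be
rewritten one coordinate at a time: each `a xⱼ` lies in the thin set (closure of
`S^∨ ∖ {0}` under products, and `0 ∈ S^∨`), so the scalar rule replaces it by `bⱼ`.
Conversely the scalar rule is the case `n = p = 1`, `a = 1` of the matrix rule.
-/

def WeakTransitive [CommSemiring S] (τ : S → S) (V : Set S) : Prop :=
  ∀ b c d : S, ∀ x ∈ V, bal τ x b → bal τ (c * x) d → bal τ (c * b) d

section

variable [CommSemiring S] {τ : S → S}

lemma mul_mem_bSet (hτ : IsSymmetry τ) (c : S) {x : S} (hx : x ∈ bSet τ) :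
    c * x ∈ bSet τ := by
  obtain ⟨a, rfl⟩ := hx
  exact ⟨c * a, by rw [mul_add, hτ.2.2.1]⟩

lemma bal.mul_left (hτ : IsSymmetry τ) (c : S) {u v : S} (h : bal τ u v) :
    bal τ (c * u) (c * v) := by
  unfold bal at h ⊢
  rw [hτ.2.2.1, ← mul_add]
  exact mul_mem_bSet hτ c h

lemma bal_add_left_iff (hτ : IsSymmetry τ) (u r e : S) :
    bal τ (u + r) e ↔ bal τ u (e + τ r) := by
  unfold bal
  rw [hτ.1, hτ.2.2.2, add_assoc, add_comm r]

lemma bal_add_right_iff (hτ : IsSymmetry τ) (u r e : S) :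
    bal τ (r + u) e ↔ bal τ u (e + τ r) := by
  rw [add_comm, bal_add_left_iff hτ]

lemma IsThin.mul_mem {V : Set S} (hV : IsThin τ V)
    (hmul : ∀ x ∈ V, ∀ y ∈ V, x ≠ 0 → y ≠ 0 → x * y ∈ V ∧ x * y ≠ 0)
    {x y : S} (hx : x ∈ V) (hy : y ∈ V) : x * y ∈ V := by
  rcases eq_or_ne x 0 with rfl | hx0
  · simpa using hV.1
  rcases eq_or_ne y 0 with rfl | hy0
  · simpa using hV.1
  exact (hmul x hx y hy hx0 hy0).1

lemma WeakTransitive.bal_sum {V : Set S} (hτ : IsSymmetry τ) (hsc : WeakTransitive τ V)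
    {ι : Type*} [DecidableEq ι] (s : Finset ι) (c y b : ι → S) (hy : ∀ j ∈ s, y j ∈ V)
    (hyb : ∀ j ∈ s, bal τ (y j) (b j)) {e : S} (h : bal τ (∑ j ∈ s, c j * y j) e) :
    bal τ (∑ j ∈ s, c j * b j) e := by
  induction s using Finset.induction_on generalizing e with
  | empty => simpa using h
  | insert j s hj ih =>
    simp only [Finset.mem_insert, forall_eq_or_imp] at hy hyb
    rw [Finset.sum_insert hj] at h ⊢
    have hj_replaced : bal τ (c j * b j + ∑ k ∈ s, c k * y k) e := by
      rw [bal_add_left_iff hτ] at h ⊢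
      exact hsc _ _ _ _ hy.1 hyb.1 h
    rw [bal_add_right_iff hτ] at hj_replaced ⊢
    exact ih hy.2 hyb.2 hj_replaced

lemma WeakTransitive.of_allowsWeakElim {V : Set S} (hV : IsThin τ V)
    (h : AllowsWeakElim τ V) : WeakTransitive τ V := by
  intro b c d x hx hxb hcxd
  simpa using h.2 1 1 1 (hV.2.1 1 isUnit_one) (fun _ _ => c) (fun _ => b) (fun _ => d)
    (fun _ => x) (fun _ => hx) (fun _ => by simpa using hxb) (fun _ => by simpa using hcxd) 0

lemma WeakTransitive.allowsWeakElim {V : Set S} (hτ : IsSymmetry τ) (hV : IsThin τ V)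
    (hmul : ∀ x ∈ V, ∀ y ∈ V, x ≠ 0 → y ≠ 0 → x * y ∈ V ∧ x * y ≠ 0)
    (hsc : WeakTransitive τ V) : AllowsWeakElim τ V := by
  refine ⟨hmul, fun n p a ha C b d x hx hab hCx i => ?_⟩
  have hCax : bal τ (∑ j, C i j * (a * x j)) (a * d i) := by
    have := (hCx i).mul_left hτ a
    simpa only [Finset.mul_sum, mul_left_comm a] using this
  exact hsc.bal_sum hτ univ (C i) (fun j => a * x j) b
    (fun j _ => hV.mul_mem hmul ha (hx j)) (fun j _ => hab j) hCax

end

theorem stmt10_general [CommSemiring S] (τ : S → S) (hτ : IsSymmetry τ)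
    (V : Set S) (hV : IsThin τ V) :
    AllowsWeakElim τ V ↔
      ((∀ x ∈ V, ∀ y ∈ V, x ≠ 0 → y ≠ 0 → x * y ∈ V ∧ x * y ≠ 0) ∧
       ∀ b c d : S, ∀ x ∈ V, bal τ x b → bal τ (c * x) d → bal τ (c * b) d) :=
  ⟨fun h => ⟨h.1, WeakTransitive.of_allowsWeakElim hV h⟩,
    fun ⟨hmul, hsc⟩ => WeakTransitive.allowsWeakElim hτ hV hmul hsc⟩

/-- `S` allows weak balance elimination iff `V ∖ {0}` is closed under multiplication and
the weak transitivity of scalar balances holds. -/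
theorem stmt10 [CommSemiring S] (τ : S → S) (hτ : IsSymmetry τ)
    (V : Set S) (hne : bSet τ ≠ Set.univ) (hV : IsThin τ V) :
    AllowsWeakElim τ V ↔
      ((∀ x ∈ V, ∀ y ∈ V, x ≠ 0 → y ≠ 0 → x * y ∈ V ∧ x * y ≠ 0) ∧
       ∀ b c d : S, ∀ x ∈ V, bal τ x b → bal τ (c * x) d → bal τ (c * b) d) :=
  stmt10_general τ hτ V hV
end

section
/- Let A be an (n-1)×n matrix over ℝ_max such that at least one of the tropical Cramer permanents per A_{|k)} (k ∈ [n]) is finite, where A_{|k)} is the (n-1)×(n-1) matrix obtained from A by deleting column k. Define x ∈ ℝ_max^n by x_k = per A_{|k)}. Then for every row i ∈ [n-1], the maximum max_{k∈[n]}(A_{ik} + x_k) is attained for at least two distinct indices k. Moreover, if for every k ∈ [n] the maximum per A_{|k)} is finite and is attained by a unique permutation, then every vector y ∈ ℝ_max^n, not identically −∞, such that for every row i the maximum max_{k∈[n]}(A_{ik} + y_k) is attained at least twice, satisfies y_k = λ + x_k for all k, for some constant λ ∈ ℝ. -/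
open Finset

/-- The tropical Cramer permanent `per A_{|k)}` of an `m × (m+1)` matrix over `ℝ_max`:
the tropical permanent of the matrix obtained by deleting column `k`. -/
noncomputable def cramerPer {m : ℕ} (A : Matrix (Fin m) (Fin (m + 1)) (WithBot ℝ))
    (k : Fin (m + 1)) : WithBot ℝ :=
  Finset.univ.sup fun σ : Equiv.Perm (Fin m) => ∑ i, A i (k.succAbove (σ i))

/-!
Write `x = cramerPer A`. The first part is an exchange argument: if `k` maximises `A i k + x k`
and `σ` is an optimal permutation for `x k`, rerouting row `i` of `σ` to column `k` gives an
assignment avoiding `c = k.succAbove (σ i)`, so `A i c + x c ≥ A i k + x k`.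

For uniqueness, complete the optimal assignment for column `l` by an extra row sent to `l`,
with real entries `z`; this is a bijection `π` from `Option (Fin m)` onto the columns. Every row
has a second maximising column for `y`, and following these alternatives from `π` closes up into
cycles: a bijection `τ ≠ π` whose weight is at least that of `π`, since the contributions of `y`
cancel along a cycle. Unique optimality forces `τ` to move the extra row. This is impossible when
`y l = ⊥`; when `y` is finite, taking `z = -y` makes every column tight for the extra row and gives
`x l - y l ≤ x k - y k` for all `k`.
-/

theorem Function.exists_iterate_mem_periodicPts {α : Type*} [Finite α] (f : α → α) (x : α) :
    ∃ n, f^[n] x ∈ periodicPts f := by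
  obtain ⟨a, b, hab, heq⟩ := Finite.exists_ne_map_eq_of_infinite (f^[·] x)
  wlog h : a < b generalizing a b
  · exact this b a hab.symm heq.symm (hab.lt_or_gt.resolve_left h)
  refine ⟨a, mk_mem_periodicPts (n := b - a) (by omega) ?_⟩
  simp only [IsPeriodicPt, IsFixedPt, ← iterate_add_apply, Nat.sub_add_cancel h.le]
  exact heq.symm

open Function Set in
theorem Equiv.Perm.exists_ne_one_of_mapsTo {α : Type*} [Finite α] {s : Set α} {f : α → α}
    (hs : s.Nonempty) (hmaps : MapsTo f s s) (hf : ∀ a ∈ s, f a ≠ a) :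
    ∃ ρ : Equiv.Perm α, ρ ≠ 1 ∧ ∀ a, ρ a ≠ a → a ∈ s ∧ ρ a = f a := by
  classical
  set g := s.piecewise f id
  obtain ⟨a, ha⟩ := hs
  obtain ⟨n, hn⟩ := exists_iterate_mem_periodicPts g a
  have hns : g^[n] a ∈ s := (hmaps.congr (piecewise_eqOn s f id).symm).iterate n ha
  set ρ := Equiv.Perm.ofSubtype ((bijOn_periodicPts g).equiv g)
  have hρ : ∀ b, ρ b ≠ b → b ∈ s ∧ ρ b = f b := fun b hb => by
    have hb' : b ∈ periodicPts g := by
      by_contra h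
      exact hb (Equiv.Perm.ofSubtype_apply_of_not_mem _ h)
    have hρb : ρ b = g b := Equiv.Perm.ofSubtype_apply_of_mem _ hb'
    have hbs : b ∈ s := by
      by_contra h
      exact hb (hρb.trans (Set.piecewise_eq_of_notMem _ _ _ h))
    exact ⟨hbs, hρb.trans (Set.piecewise_eq_of_mem _ _ _ hbs)⟩
  have hρx : ρ (g^[n] a) = f (g^[n] a) :=
    (Equiv.Perm.ofSubtype_apply_of_mem _ hn).trans (Set.piecewise_eq_of_mem _ _ _ hns)
  refine ⟨ρ, fun h1 => hf _ hns ?_, hρ⟩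
  rw [← hρx, h1, Equiv.Perm.one_apply]

theorem WithBot.coe_unbotD_of_ne_bot {α : Type*} {x : WithBot α} (d : α) (hx : x ≠ ⊥) :
    ((x.unbotD d : α) : WithBot α) = x := by
  lift x to α using hx
  rfl

theorem exists_equiv_ne_sum_le {α β : Type*} [Fintype α] [Fintype β] (C : α → β → WithBot ℝ)
    (y : β → WithBot ℝ) (π : α ≃ β) (c : α → β) (hne : ∃ r, y (π r) ≠ ⊥)
    (hc : ∀ r, y (π r) ≠ ⊥ →
      c r ≠ π r ∧ y (c r) ≠ ⊥ ∧ C r (π r) + y (π r) ≤ C r (c r) + y (c r)) :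
    ∃ τ : α ≃ β, τ ≠ π ∧ (∀ r, τ r ≠ π r → y (π r) ≠ ⊥ ∧ τ r = c r) ∧
      ∑ r, C r (π r) ≤ ∑ r, C r (τ r) := by
  obtain ⟨ρ, hρ1, hρ⟩ := Equiv.Perm.exists_ne_one_of_mapsTo (s := {r | y (π r) ≠ ⊥})
    (f := fun r => π.symm (c r)) hne (fun r hr => by simpa using (hc r hr).2.1)
    (fun r hr h => (hc r hr).1 (by simpa [Equiv.symm_apply_eq] using h))
  have hmoved : ∀ r, ρ r ≠ r → y (π r) ≠ ⊥ ∧ π (ρ r) = c r := fun r hr => by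
    obtain ⟨hs, he⟩ := hρ r hr
    exact ⟨hs, by simp [he]⟩
  refine ⟨ρ.trans π, fun h => hρ1 (Equiv.ext fun r => π.injective ?_), fun r hr => ?_, ?_⟩
  · simpa using congrArg (· r) h
  · exact hmoved r fun h => hr (by simp [h])
  · -- `y` is finite on the moved rows, so it may be replaced there by a real vector and cancelled
    set y' : β → ℝ := fun j => (y j).unbotD 0
    have hy' : ∀ j, y j ≠ ⊥ → (y' j : WithBot ℝ) = y j := fun j =>
      WithBot.coe_unbotD_of_ne_bot 0
    have hterm : ∀ r, C r (π r) + (y' (π r) : WithBot ℝ) ≤ C r (π (ρ r)) + y' (π (ρ r)) := by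
      intro r
      by_cases hr : ρ r = r
      · rw [hr]
      obtain ⟨hs, he⟩ := hmoved r hr
      have hcs := (hc r hs).2.1
      rw [he, hy' _ hs, hy' _ hcs]
      exact (hc r hs).2.2
    have hsum := Finset.sum_le_sum fun r (_ : r ∈ univ) => hterm r
    rw [sum_add_distrib, sum_add_distrib, ← WithBot.coe_sum, ← WithBot.coe_sum,
      Equiv.sum_comp ρ (fun r => y' (π r)), Equiv.sum_comp π y'] at hsum
    show ∑ r, C r (π r) ≤ ∑ r, C r (π (ρ r))
    exact (WithBot.add_le_add_iff_right WithBot.coe_ne_bot).mp hsum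

def RowMaxAttainedTwice {ι κ : Type*} (A : Matrix ι κ (WithBot ℝ)) (y : κ → WithBot ℝ) : Prop :=
  ∀ i, ∃ k l, k ≠ l ∧ A i k + y k = A i l + y l ∧ ∀ j, A i j + y j ≤ A i k + y k

theorem RowMaxAttainedTwice.exists_ne_le {ι κ : Type*} {A : Matrix ι κ (WithBot ℝ)}
    {y : κ → WithBot ℝ} (h : RowMaxAttainedTwice A y) (i : ι) (j : κ) :
    ∃ k ≠ j, A i j + y j ≤ A i k + y k := by
  obtain ⟨k, l, hkl, heq, hmax⟩ := h i
  by_cases hkj : k = j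
  · exact ⟨l, hkj ▸ hkl.symm, heq ▸ hmax j⟩
  · exact ⟨k, hkj, hmax j⟩

theorem Fin.exists_perm_eq_succAbove {m : ℕ} {g : Fin m → Fin (m + 1)}
    (hg : Function.Injective g) {l : Fin (m + 1)} (hl : ∀ i, g i ≠ l) :
    ∃ σ : Equiv.Perm (Fin m), ∀ i, g i = l.succAbove (σ i) := by
  choose u hu using fun i => Fin.exists_succAbove_eq (hl i)
  have hu_inj : Function.Injective u := fun i j hij => hg (by rw [← hu i, ← hu j, hij])
  exact ⟨Equiv.ofBijective u hu_inj.bijective_of_finite, fun i => (hu i).symm⟩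

section

variable {m : ℕ}

def succAboveEquiv (l : Fin (m + 1)) (σ : Equiv.Perm (Fin m)) : Option (Fin m) ≃ Fin (m + 1) :=
  σ.optionCongr.trans (finSuccEquiv' l).symm

@[simp]
theorem succAboveEquiv_none (l : Fin (m + 1)) (σ : Equiv.Perm (Fin m)) :
    succAboveEquiv l σ none = l :=
  finSuccEquiv'_symm_none l

@[simp]
theorem succAboveEquiv_some (l : Fin (m + 1)) (σ : Equiv.Perm (Fin m)) (i : Fin m) :
    succAboveEquiv l σ (some i) = l.succAbove (σ i) :=
  finSuccEquiv'_symm_some l (σ i)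

theorem exists_eq_succAboveEquiv (τ : Option (Fin m) ≃ Fin (m + 1)) :
    ∃ σ, τ = succAboveEquiv (τ none) σ := by
  obtain ⟨σ, hσ⟩ := Fin.exists_perm_eq_succAbove (τ.injective.comp (Option.some_injective _))
    fun i h => Option.some_ne_none i (τ.injective h)
  refine ⟨σ, Equiv.ext fun r => ?_⟩
  cases r with
  | none => simp
  | some i => simpa using hσ i

end

section Cramer

variable {m : ℕ} (A : Matrix (Fin m) (Fin (m + 1)) (WithBot ℝ))

def HasUniqueOptimalPerms : Prop :=
  ∀ k, cramerPer A k ≠ ⊥ ∧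
    ∃! σ : Equiv.Perm (Fin m), (∑ i, A i (k.succAbove (σ i))) = cramerPer A k

theorem exists_sum_eq_cramerPer (k : Fin (m + 1)) :
    ∃ σ : Equiv.Perm (Fin m), ∑ i, A i (k.succAbove (σ i)) = cramerPer A k := by
  obtain ⟨σ, -, hσ⟩ := exists_mem_eq_sup univ univ_nonempty
    fun σ : Equiv.Perm (Fin m) => ∑ i, A i (k.succAbove (σ i))
  exact ⟨σ, hσ.symm⟩

theorem sum_succAbove_le_cramerPer {k : Fin (m + 1)} (σ : Equiv.Perm (Fin m)) :
    ∑ i, A i (k.succAbove (σ i)) ≤ cramerPer A k :=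
  le_sup (f := fun σ : Equiv.Perm (Fin m) => ∑ i, A i (k.succAbove (σ i))) (mem_univ σ)

theorem sum_le_cramerPer {g : Fin m → Fin (m + 1)} (hg : Function.Injective g) {l : Fin (m + 1)}
    (hl : ∀ i, g i ≠ l) : ∑ i, A i (g i) ≤ cramerPer A l := by
  obtain ⟨σ, hσ⟩ := Fin.exists_perm_eq_succAbove hg hl
  simpa only [hσ] using sum_succAbove_le_cramerPer A σ

theorem sum_some_le_cramerPer (τ : Option (Fin m) ≃ Fin (m + 1)) :
    ∑ i, A i (τ (some i)) ≤ cramerPer A (τ none) := by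
  obtain ⟨σ, hσ⟩ := exists_eq_succAboveEquiv τ
  rw [hσ]
  simpa using sum_succAbove_le_cramerPer A σ

theorem add_cramerPer_le_of_sum_eq {k : Fin (m + 1)} {σ : Equiv.Perm (Fin m)}
    (hσ : ∑ j, A j (k.succAbove (σ j)) = cramerPer A k) (i : Fin m) :
    A i k + cramerPer A k ≤ A i (k.succAbove (σ i)) + cramerPer A (k.succAbove (σ i)) := by
  set c := k.succAbove (σ i)
  -- reroute row `i` of the optimal assignment for column `k` to `k`: it now avoids `c`
  set g : Fin m → Fin (m + 1) := fun j => Equiv.swap k c (k.succAbove (σ j))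
  have hg_inj : Function.Injective g :=
    (Equiv.swap k c).injective.comp (Fin.succAbove_right_injective.comp σ.injective)
  have hgc : ∀ j, g j ≠ c := fun j h => by
    simp [g, Equiv.swap_apply_eq_iff] at h
  have hgj : ∀ j ≠ i, g j = k.succAbove (σ j) := fun j hj =>
    Equiv.swap_apply_of_ne_of_ne (Fin.succAbove_ne k (σ j))
      (fun h => hj (σ.injective (Fin.succAbove_right_injective h)))
  have hsum : A i c + ∑ j, A j (g j) = A i k + cramerPer A k := by
    rw [← hσ, ← add_sum_erase _ _ (mem_univ i), ← add_sum_erase _ _ (mem_univ i),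
      show g i = k from Equiv.swap_apply_right k c, add_left_comm,
      sum_congr rfl fun j hj => congrArg (A j) (hgj j (ne_of_mem_erase hj))]
  rw [← hsum]
  exact add_le_add_right (sum_le_cramerPer A hg_inj hgc) _

theorem rowMaxAttainedTwice_cramerPer : RowMaxAttainedTwice A (cramerPer A) := by
  intro i
  obtain ⟨k, -, hk⟩ := exists_max_image univ (fun j => A i j + cramerPer A j) univ_nonempty
  obtain ⟨σ, hσ⟩ := exists_sum_eq_cramerPer A k
  exact ⟨k, k.succAbove (σ i), (Fin.succAbove_ne k (σ i)).symm,
    le_antisymm (add_cramerPer_le_of_sum_eq A hσ i) (hk _ (mem_univ _)),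
    fun j => hk j (mem_univ j)⟩

end Cramer

namespace HasUniqueOptimalPerms

variable {m : ℕ} {A : Matrix (Fin m) (Fin (m + 1)) (WithBot ℝ)} {y : Fin (m + 1) → WithBot ℝ}

theorem eq_succAboveEquiv (hu : HasUniqueOptimalPerms A)
    {l : Fin (m + 1)} {σ : Equiv.Perm (Fin m)} (hσ : ∑ i, A i (l.succAbove (σ i)) = cramerPer A l)
    {τ : Option (Fin m) ≃ Fin (m + 1)} (hτ : τ none = l)
    (h : cramerPer A l ≤ ∑ i, A i (τ (some i))) : τ = succAboveEquiv l σ := by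
  obtain ⟨σ', hσ'⟩ := exists_eq_succAboveEquiv τ
  rw [hτ] at hσ'
  rw [hσ'] at h ⊢
  simp only [succAboveEquiv_some] at h
  rw [(hu l).2.unique (le_antisymm (sum_succAbove_le_cramerPer A σ') h) hσ]

theorem ne_bot_and_add_cramerPer_le (hu : HasUniqueOptimalPerms A)
    (hy : RowMaxAttainedTwice A y) (hne : ∃ j, y j ≠ ⊥) (z : Fin (m + 1) → ℝ) {l k : Fin (m + 1)}
    (hk : y l ≠ ⊥ → k ≠ l ∧ y k ≠ ⊥ ∧ (z l : WithBot ℝ) + y l ≤ z k + y k) :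
    y l ≠ ⊥ ∧ (z l : WithBot ℝ) + cramerPer A l ≤ z k + cramerPer A k := by
  obtain ⟨σ, hσ⟩ := exists_sum_eq_cramerPer A l
  have hA : ∀ i, A i (l.succAbove (σ i)) ≠ ⊥ := fun i h =>
    (hu l).1 (hσ ▸ WithBot.sum_eq_bot_iff.mpr ⟨i, mem_univ i, h⟩)
  choose c hc using fun i => hy.exists_ne_le i (l.succAbove (σ i))
  -- the optimal assignment for `l`, completed by an extra row `none` with entries `z`
  set π := succAboveEquiv l σ
  set C : Option (Fin m) → Fin (m + 1) → WithBot ℝ := fun r j => r.elim (z j) (A · j)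
  obtain ⟨τ, hτπ, hτ, hsum⟩ := exists_equiv_ne_sum_le C y π (fun r => r.elim k c)
    ⟨π.symm hne.choose, by simpa using hne.choose_spec⟩ fun r hr => by
      cases r with
      | none => simpa [π, C] using hk (by simpa [π] using hr)
      | some i =>
        obtain ⟨hci, hle⟩ := hc i
        refine ⟨by simpa [π] using hci, fun hbot => ?_, by simpa [π, C] using hle⟩
        rw [show y (c i) = ⊥ from hbot, WithBot.add_bot, le_bot_iff,
          WithBot.add_eq_bot] at hle
        exact hle.elim (hA i) (by simpa [π] using hr)
  simp only [Fintype.sum_option, C, Option.elim, π, succAboveEquiv_none, succAboveEquiv_some,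
    hσ] at hsum
  have hnone : τ none ≠ π none := fun h => hτπ <|
    hu.eq_succAboveEquiv hσ (h.trans (succAboveEquiv_none l σ)) <| by
      rw [h, succAboveEquiv_none] at hsum
      exact (WithBot.add_le_add_iff_left WithBot.coe_ne_bot).mp hsum
  obtain ⟨hyl, hτk⟩ := hτ none hnone
  refine ⟨by simpa [π] using hyl, hsum.trans ?_⟩
  simpa [hτk] using add_le_add_right (sum_some_le_cramerPer A τ) (z k : WithBot ℝ)

theorem ne_bot (hu : HasUniqueOptimalPerms A)
    (hy : RowMaxAttainedTwice A y) (hne : ∃ j, y j ≠ ⊥) (l : Fin (m + 1)) : y l ≠ ⊥ := fun hl =>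
  (hu.ne_bot_and_add_cramerPer_le hy hne 0 (k := l) fun h => (h hl).elim).1 hl

theorem exists_eq_add_cramerPer (hu : HasUniqueOptimalPerms A)
    (hy : RowMaxAttainedTwice A y) (hne : ∃ j, y j ≠ ⊥) :
    ∃ lam : ℝ, ∀ k, y k = (lam : WithBot ℝ) + cramerPer A k := by
  choose yr hyr using fun j => WithBot.ne_bot_iff_exists.mp (hu.ne_bot hy hne j)
  choose xr hxr using fun j => WithBot.ne_bot_iff_exists.mp (hu j).1
  -- with `z = -yr` the extra row is tight in every column, so every `k ≠ l` is admissible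
  have hle : ∀ l k, xr l - yr l ≤ xr k - yr k := by
    intro l k
    rcases eq_or_ne k l with rfl | hkl
    · rfl
    have h := (hu.ne_bot_and_add_cramerPer_le hy hne (-yr) (l := l) (k := k) fun _ =>
      ⟨hkl, hyr k ▸ WithBot.coe_ne_bot, by simp [← hyr, ← WithBot.coe_add]⟩).2
    rw [← hxr, ← hxr, ← WithBot.coe_add, ← WithBot.coe_add, WithBot.coe_le_coe] at h
    simp only [Pi.neg_apply] at h
    linarith
  refine ⟨yr 0 - xr 0, fun k => ?_⟩
  rw [← hyr, ← hxr, ← WithBot.coe_add, WithBot.coe_inj]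
  linarith [hle 0 k, hle k 0]

end HasUniqueOptimalPerms

theorem stmt17_general (m : ℕ) (A : Matrix (Fin m) (Fin (m + 1)) (WithBot ℝ)) :
    (∀ i : Fin m, ∃ k l : Fin (m + 1), k ≠ l ∧
        A i k + cramerPer A k = A i l + cramerPer A l ∧
        ∀ j, A i j + cramerPer A j ≤ A i k + cramerPer A k) ∧
    ((∀ k : Fin (m + 1), cramerPer A k ≠ ⊥ ∧
        ∃! σ : Equiv.Perm (Fin m), (∑ i, A i (k.succAbove (σ i))) = cramerPer A k) →
      ∀ y : Fin (m + 1) → WithBot ℝ, (∃ k, y k ≠ ⊥) →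
        (∀ i : Fin m, ∃ k l : Fin (m + 1), k ≠ l ∧
          A i k + y k = A i l + y l ∧ ∀ j, A i j + y j ≤ A i k + y k) →
        ∃ lam : ℝ, ∀ k, y k = (lam : WithBot ℝ) + cramerPer A k) :=
  ⟨rowMaxAttainedTwice_cramerPer A, fun hu _ hne hy =>
    HasUniqueOptimalPerms.exists_eq_add_cramerPer hu hy hne⟩

/-- The vector of tropical Cramer permanents `x_k = per A_{|k)}` makes the maximum
`max_k (A_{ik} + x_k)` be attained at least twice in every row; moreover, if every
`per A_{|k)}` is finite and attained by a unique permutation, this vector is the unique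
such vector up to an additive real constant. -/
theorem stmt17 (m : ℕ) (A : Matrix (Fin m) (Fin (m + 1)) (WithBot ℝ))
    (hfin : ∃ k, cramerPer A k ≠ ⊥) :
    (∀ i : Fin m, ∃ k l : Fin (m + 1), k ≠ l ∧
        A i k + cramerPer A k = A i l + cramerPer A l ∧
        ∀ j, A i j + cramerPer A j ≤ A i k + cramerPer A k) ∧
    ((∀ k : Fin (m + 1), cramerPer A k ≠ ⊥ ∧
        ∃! σ : Equiv.Perm (Fin m), (∑ i, A i (k.succAbove (σ i))) = cramerPer A k) →
      ∀ y : Fin (m + 1) → WithBot ℝ, (∃ k, y k ≠ ⊥) →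
        (∀ i : Fin m, ∃ k l : Fin (m + 1), k ≠ l ∧
          A i k + y k = A i l + y l ∧ ∀ j, A i j + y j ≤ A i k + y k) →
        ∃ lam : ℝ, ∀ k, y k = (lam : WithBot ℝ) + cramerPer A k) :=
  stmt17_general m A
end
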